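/- Let n ≥ 1, let A, B : Fin n → Fin n → ℝ have all entries in [0.9, 1.1], let k ∈ Fin n and δ ≥ 0, and let G_t = (1−t)G₀ + tG₁ be the associated homotopy of (n+1)×(n+1) bimatrix games. Let t ∈ (0,1] and let (x, y) be a Nash equilibrium of G_t with x(0) < 1 and y(0) < 1. Define x'(i) = x(i+1)/(1 − x(0)) and y'(j) = y(j+1)/(1 − y(0)), and set b = δ·x(0)/(1 − x(0)). Then (x', y') is a Nash equilibrium of the n×n game with payoff matrices (A, B^b), where B^b(i,j) = B(i,j) + b if j = k and B^b(i,j) = B(i,j) otherwise. -/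

import Mathlib

open Finset in
/-- Expected payoff Σ_{i,j} x(i)·M(i,j)·y(j) of the game matrix M under mixed
strategies x (row) and y (column). -/
def payoff {m : ℕ} (M : Fin m → Fin m → ℝ) (x y : Fin m → ℝ) : ℝ :=
  ∑ i, ∑ j, x i * M i j * y j

/-- (x,y) is a Nash equilibrium of the bimatrix game with row payoff matrix R and
column payoff matrix C. -/
def NashEq {m : ℕ} (R C : Fin m → Fin m → ℝ) (x y : Fin m → ℝ) : Prop :=
  x ∈ stdSimplex ℝ (Fin m) ∧ y ∈ stdSimplex ℝ (Fin m) ∧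
  (∀ x' ∈ stdSimplex ℝ (Fin m), payoff R x' y ≤ payoff R x y) ∧
  (∀ y' ∈ stdSimplex ℝ (Fin m), payoff C x y' ≤ payoff C x y)

/-- Row payoff matrix R₁ of the game G₁: R₁(0,j) = 0, R₁(i+1,0) = −1,
R₁(i+1,j+1) = A(i,j). -/
def R1 {n : ℕ} (A : Fin n → Fin n → ℝ) (i j : Fin (n + 1)) : ℝ :=
  Fin.cases 0 (fun i' => Fin.cases (-1) (fun j' => A i' j') j) i

/-- Column payoff matrix C₁ of the game G₁: C₁(0,0) = −1, C₁(0,j+1) = 3/4 + δ if j = k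
and 3/4 otherwise, C₁(i+1,0) = 3/4, C₁(i+1,j+1) = B(i,j). -/
noncomputable def C1 {n : ℕ} (B : Fin n → Fin n → ℝ) (k : Fin n) (δ : ℝ) (i j : Fin (n + 1)) : ℝ :=
  Fin.cases
    (Fin.cases (-1) (fun j' => if j' = k then 3 / 4 + δ else 3 / 4) j)
    (fun i' => Fin.cases (3 / 4) (fun j' => B i' j') j) i

/-- Row payoff matrix R₀ of the game G₀: payoff 1 on row 0, payoff 0 elsewhere. -/
noncomputable def R0 {n : ℕ} (i _j : Fin (n + 1)) : ℝ := if i = 0 then 1 else 0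

/-- Column payoff matrix C₀ of the game G₀: payoff 1 on column 0, payoff 0 elsewhere. -/
noncomputable def C0 {n : ℕ} (_i j : Fin (n + 1)) : ℝ := if j = 0 then 1 else 0

/-!
Let `(x, y)` be a Nash equilibrium of `G_t`. Keeping the weight `x(0)` on strategy `0` and
redistributing the remaining mass `1 - x(0)` arbitrarily is a feasible deviation, so the
renormalized tail `x'` maximizes, over the smaller simplex, the tail of the row player's payoff
vector `R_t y`. In `G_t` that tail is `t (1 - y(0)) · A y' - t y(0)`, a positive affine image
of `A y'`, so `x'` is a best response to `y'` in `A`. Symmetrically, the tail of `xᵀ C_t` is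
`t (1 - x(0)) · x'ᵀ B^b + (3/4) t x(0)`: the bonus `t δ x(0)` that row `0` pays on column `k`
becomes the bonus `b = δ x(0) / (1 - x(0))` after dividing by `t (1 - x(0))`.
-/

open Finset Matrix

lemma payoff_eq_dotProduct_mulVec {m : ℕ} (M : Fin m → Fin m → ℝ) (x y : Fin m → ℝ) :
    payoff M x y = x ⬝ᵥ (of M *ᵥ y) := by
  simp only [payoff, dotProduct, mulVec, of_apply, mul_sum, mul_assoc]

lemma payoff_eq_dotProduct_vecMul {m : ℕ} (M : Fin m → Fin m → ℝ) (x y : Fin m → ℝ) :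
    payoff M x y = y ⬝ᵥ (x ᵥ* of M) := by
  rw [payoff_eq_dotProduct_mulVec, dotProduct_mulVec, dotProduct_comm]

lemma dotProduct_eq_head_add_tail {m : ℕ} (x v : Fin (m + 1) → ℝ) :
    x ⬝ᵥ v = x 0 * v 0 + Fin.tail x ⬝ᵥ Fin.tail v := by
  simp only [dotProduct, Fin.sum_univ_succ, Fin.tail]

lemma dotProduct_affine_of_mem_stdSimplex {m : ℕ} {u : Fin m → ℝ}
    (hu : u ∈ stdSimplex ℝ (Fin m)) (w : Fin m → ℝ) (c d : ℝ) :
    u ⬝ᵥ (fun i => c * w i + d) = c * (u ⬝ᵥ w) + d := by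
  simp only [dotProduct, mul_add, sum_add_distrib, ← sum_mul, hu.2, one_mul, mul_sum]
  congr 1
  exact sum_congr rfl fun i _ => by ring

noncomputable def renormalizedTail {m : ℕ} (x : Fin (m + 1) → ℝ) : Fin m → ℝ :=
  fun i => x i.succ / (1 - x 0)

lemma tail_eq_smul_renormalizedTail {m : ℕ} {x : Fin (m + 1) → ℝ} (hx0 : x 0 ≠ 1) :
    Fin.tail x = (1 - x 0) • renormalizedTail x := by
  ext i
  simp [renormalizedTail, Fin.tail, mul_div_cancel₀ _ (sub_ne_zero.2 hx0.symm)]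

lemma renormalizedTail_mem_stdSimplex {m : ℕ} {x : Fin (m + 1) → ℝ}
    (hx : x ∈ stdSimplex ℝ (Fin (m + 1))) (hx0 : x 0 < 1) :
    renormalizedTail x ∈ stdSimplex ℝ (Fin m) := by
  have hpos : 0 < 1 - x 0 := sub_pos.2 hx0
  refine ⟨fun i => div_nonneg (hx.1 i.succ) hpos.le, ?_⟩
  have hsum := hx.2
  rw [Fin.sum_univ_succ] at hsum
  simp only [renormalizedTail]
  rw [← sum_div, div_eq_one_iff_eq hpos.ne']
  linarith

lemma cons_smul_mem_stdSimplex {m : ℕ} {x : Fin (m + 1) → ℝ} {u : Fin m → ℝ}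
    (hx : x ∈ stdSimplex ℝ (Fin (m + 1))) (hu : u ∈ stdSimplex ℝ (Fin m)) :
    Fin.cons (x 0) ((1 - x 0) • u) ∈ stdSimplex ℝ (Fin (m + 1)) := by
  have hx0 : x 0 ≤ 1 := (mem_Icc_of_mem_stdSimplex hx 0).2
  refine ⟨Fin.cases (hx.1 0) fun i => mul_nonneg (sub_nonneg.2 hx0) (hu.1 i), ?_⟩
  simp [Fin.sum_univ_succ, ← mul_sum, hu.2]

lemma dotProduct_le_renormalizedTail_dotProduct {m : ℕ} {x v : Fin (m + 1) → ℝ}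
    {w : Fin m → ℝ} {c d : ℝ}
    (hx : x ∈ stdSimplex ℝ (Fin (m + 1))) (hx0 : x 0 < 1)
    (hmax : ∀ x' ∈ stdSimplex ℝ (Fin (m + 1)), x' ⬝ᵥ v ≤ x ⬝ᵥ v)
    (hc : 0 < c) (hv : ∀ i, v i.succ = c * w i + d) :
    ∀ u ∈ stdSimplex ℝ (Fin m), u ⬝ᵥ w ≤ renormalizedTail x ⬝ᵥ w := by
  intro u hu
  have htail : Fin.tail v = fun i => c * w i + d := funext hv
  have h := hmax _ (cons_smul_mem_stdSimplex hx hu)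
  rw [dotProduct_eq_head_add_tail, dotProduct_eq_head_add_tail x,
    tail_eq_smul_renormalizedTail hx0.ne, Fin.tail_cons, Fin.cons_zero, smul_dotProduct,
    smul_dotProduct, htail, dotProduct_affine_of_mem_stdSimplex hu,
    dotProduct_affine_of_mem_stdSimplex (renormalizedTail_mem_stdSimplex hx hx0)] at h
  have hpos : 0 < 1 - x 0 := sub_pos.2 hx0
  simp only [smul_eq_mul] at h
  have h' := le_of_mul_le_mul_left (le_of_add_le_add_left h) hpos
  exact le_of_mul_le_mul_left (le_of_add_le_add_right h') hc

lemma vecMul_bonusColumn_apply {m : ℕ} (B : Fin m → Fin m → ℝ) (k : Fin m) (b : ℝ)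
    {u : Fin m → ℝ} (hu : u ∈ stdSimplex ℝ (Fin m)) (j : Fin m) :
    (u ᵥ* of (fun i j => if j = k then B i j + b else B i j)) j
      = (u ᵥ* of B) j + if j = k then b else 0 := by
  split_ifs with hj
  · simp [vecMul, dotProduct, hj, mul_add, sum_add_distrib, ← sum_mul, hu.2]
  · simp [vecMul, dotProduct, hj]

lemma homotopy_row_mulVec_succ {n : ℕ} (A : Fin n → Fin n → ℝ) (t : ℝ)
    {y : Fin (n + 1) → ℝ} (hy0 : y 0 ≠ 1) (i : Fin n) :
    (of (fun i j => (1 - t) * R0 i j + t * R1 A i j) *ᵥ y) i.succ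
      = t * (1 - y 0) * (of A *ᵥ renormalizedTail y) i + -(t * y 0) := by
  have hne : 1 - y 0 ≠ 0 := sub_ne_zero.2 hy0.symm
  simp only [mulVec, dotProduct, R0, R1, of_apply, mul_ite, mul_one, mul_zero, mul_neg,
    neg_mul, Fin.succ_ne_zero, ↓reduceIte, Fin.cases_succ, Fin.cases_zero, zero_add,
    Fin.sum_univ_succ, renormalizedTail, mul_sum]
  rw [add_comm]
  congr 1
  exact sum_congr rfl fun j _ => by field_simp

lemma homotopy_col_vecMul_succ {n : ℕ} (B : Fin n → Fin n → ℝ) (k : Fin n) (δ t : ℝ)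
    {x : Fin (n + 1) → ℝ} (hx : x ∈ stdSimplex ℝ (Fin (n + 1))) (hx0 : x 0 < 1) (j : Fin n) :
    (x ᵥ* of (fun i j => (1 - t) * C0 i j + t * C1 B k δ i j)) j.succ
      = t * (1 - x 0) * (renormalizedTail x ᵥ*
          of (fun i j => if j = k then B i j + δ * x 0 / (1 - x 0) else B i j)) j
        + t * x 0 * (3 / 4) := by
  rw [vecMul_bonusColumn_apply _ _ _ (renormalizedTail_mem_stdSimplex hx hx0)]
  have hne : 1 - x 0 ≠ 0 := (sub_pos.2 hx0).ne'
  simp only [vecMul, dotProduct, C0, C1, of_apply, mul_ite, mul_one, mul_zero,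
    Fin.succ_ne_zero, ↓reduceIte, Fin.cases_succ, Fin.cases_zero, zero_add, Fin.sum_univ_succ,
    renormalizedTail]
  have hsum : ∑ i, t * (1 - x 0) * (x i.succ / (1 - x 0) * B i j)
      = ∑ i, x i.succ * (t * B i j) :=
    sum_congr rfl fun i _ => by field_simp
  rw [mul_add (t * (1 - x 0)), mul_sum, hsum]
  split_ifs <;> field_simp <;> ring

theorem nashEq_Gt_renormalized (n : ℕ) (A B : Fin n → Fin n → ℝ)
    (k : Fin n) (δ : ℝ)
    (t : ℝ) (ht : t ∈ Set.Ioc (0 : ℝ) 1)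
    (x y : Fin (n + 1) → ℝ)
    (hNE : NashEq (fun i j => (1 - t) * R0 i j + t * R1 A i j)
                  (fun i j => (1 - t) * C0 i j + t * C1 B k δ i j) x y)
    (hx0 : x 0 < 1) (hy0 : y 0 < 1) :
    NashEq A
      (fun i j => if j = k then B i j + δ * x 0 / (1 - x 0) else B i j)
      (fun i : Fin n => x i.succ / (1 - x 0))
      (fun j : Fin n => y j.succ / (1 - y 0)) := by
  obtain ⟨hx, hy, hxBest, hyBest⟩ := hNE
  refine ⟨renormalizedTail_mem_stdSimplex hx hx0, renormalizedTail_mem_stdSimplex hy hy0, ?_, ?_⟩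
  · simp only [payoff_eq_dotProduct_mulVec] at hxBest ⊢
    exact dotProduct_le_renormalizedTail_dotProduct hx hx0 hxBest (mul_pos ht.1 (sub_pos.2 hy0))
      (homotopy_row_mulVec_succ A t hy0.ne)
  · simp only [payoff_eq_dotProduct_vecMul] at hyBest ⊢
    exact dotProduct_le_renormalizedTail_dotProduct hy hy0 hyBest (mul_pos ht.1 (sub_pos.2 hx0))
      (homotopy_col_vecMul_succ B k δ t hx hx0)
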